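/- arXiv:1703.10243 — 6 statements merged into one kernel-verified Lean document; each statement's English description precedes it below -/
import Mathlib

section
/- Let E be a real inner product space, V : E → ℝ a C¹ function with gradient ∇V, and y, z ∈ E. For a C¹ path q : [0,1] → E with q(0) = y, q(1) = z, define the optimal-control action A_oc(q) = ∫₀¹ (1/2)‖q'(t) + ∇V(q(t))‖² dt and the mechanics action A_m(q) = ∫₀¹ ((1/2)‖q'(t)‖² + (1/2)‖∇V(q(t))‖²) dt. Then a path q* (C¹, from y to z) minimizes A_oc over all C¹ paths from y to z if and only if it minimizes A_m over the same class of paths. -/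
/-!
Expanding the square, `½‖q' + ∇V(q)‖² = ½‖q'‖² + ½‖∇V(q)‖² + ⟪q', ∇V(q)⟫`, and the cross term
is the derivative of `V ∘ q`, so it integrates to `V z - V y` for every path from `y` to `z`.
The two actions therefore differ by a constant on the admissible class and have the same minimizers.
-/

open intervalIntegral

section Gradient

variable {E : Type*} [NormedAddCommGroup E] [InnerProductSpace ℝ E] {V : E → ℝ} {gradV : E → E}

theorem continuous_of_hasFDerivAt_innerSL (hV : ContDiff ℝ 1 V)
    (hgrad : ∀ x, HasFDerivAt V (innerSL ℝ (gradV x)) x) : Continuous gradV := by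
  have hfderiv : fderiv ℝ V = fun x => innerSL ℝ (gradV x) :=
    funext fun x => (hgrad x).fderiv
  have hdual : Continuous fun x => innerSL ℝ (gradV x) :=
    hfderiv ▸ hV.continuous_fderiv one_ne_zero
  exact (InnerProductSpace.toDualMap ℝ E).isometry.comp_continuous_iff.mp hdual

theorem integral_inner_deriv_gradient_eq_sub
    (hgrad : ∀ x, HasFDerivAt V (innerSL ℝ (gradV x)) x) (hgradc : Continuous gradV)
    {q : ℝ → E} (hq : ContDiff ℝ 1 q) (a b : ℝ) :
    ∫ t in a..b, inner ℝ (deriv q t) (gradV (q t)) = V (q b) - V (q a) := by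
  have hq' : Continuous (deriv q) := hq.continuous_deriv le_rfl
  have hgq : Continuous fun t => gradV (q t) := hgradc.comp hq.continuous
  refine integral_eq_sub_of_hasDerivAt (f := fun s => V (q s)) (fun t _ => ?_)
    ((by fun_prop : Continuous fun t => inner ℝ (deriv q t) (gradV (q t))).intervalIntegrable _ _)
  rw [real_inner_comm]
  exact (hgrad (q t)).comp_hasDerivAt t (hq.differentiable one_ne_zero t).hasDerivAt

theorem integral_half_norm_deriv_add_gradient_sq
    (hgrad : ∀ x, HasFDerivAt V (innerSL ℝ (gradV x)) x) (hgradc : Continuous gradV)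
    {q : ℝ → E} (hq : ContDiff ℝ 1 q) (a b : ℝ) :
    ∫ t in a..b, (1/2) * ‖deriv q t + gradV (q t)‖^2
      = (∫ t in a..b, ((1/2) * ‖deriv q t‖^2 + (1/2) * ‖gradV (q t)‖^2))
        + (V (q b) - V (q a)) := by
  have hq' : Continuous (deriv q) := hq.continuous_deriv le_rfl
  have hgq : Continuous fun t => gradV (q t) := hgradc.comp hq.continuous
  rw [← integral_inner_deriv_gradient_eq_sub hgrad hgradc hq, ← integral_add
    ((by fun_prop : Continuous _).intervalIntegrable _ _)
    ((by fun_prop : Continuous fun t => inner ℝ (deriv q t) (gradV (q t))).intervalIntegrable _ _)]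
  congr 1 with t
  rw [norm_add_sq_real]
  ring

end Gradient

/-- Over C¹ paths from `y` to `z`, a path `qs` minimizes the
optimal-control action `A_oc(q) = ∫₀¹ (1/2)‖q' + ∇V(q)‖²` iff it minimizes the
mechanics action `A_m(q) = ∫₀¹ ((1/2)‖q'‖² + (1/2)‖∇V(q)‖²)`. -/
theorem stmt2 {E : Type*} [NormedAddCommGroup E] [InnerProductSpace ℝ E]
    (V : E → ℝ) (hV : ContDiff ℝ 1 V)
    (gradV : E → E) (hgrad : ∀ x, HasFDerivAt V (innerSL ℝ (gradV x)) x)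
    (y z : E) (qs : ℝ → E) (hqs : ContDiff ℝ 1 qs) (hqs0 : qs 0 = y) (hqs1 : qs 1 = z) :
    ((∀ q : ℝ → E, ContDiff ℝ 1 q → q 0 = y → q 1 = z →
        (∫ t in (0:ℝ)..1, (1/2) * ‖deriv qs t + gradV (qs t)‖^2)
          ≤ ∫ t in (0:ℝ)..1, (1/2) * ‖deriv q t + gradV (q t)‖^2)
      ↔ (∀ q : ℝ → E, ContDiff ℝ 1 q → q 0 = y → q 1 = z →
        (∫ t in (0:ℝ)..1, ((1/2) * ‖deriv qs t‖^2 + (1/2) * ‖gradV (qs t)‖^2))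
          ≤ ∫ t in (0:ℝ)..1, ((1/2) * ‖deriv q t‖^2 + (1/2) * ‖gradV (q t)‖^2))) := by
  have hgradc := continuous_of_hasFDerivAt_innerSL hV hgrad
  refine forall_congr' fun q => imp_congr_right fun hq => imp_congr_right fun hq0 =>
    imp_congr_right fun hq1 => ?_
  rw [integral_half_norm_deriv_add_gradient_sq hgrad hgradc hqs,
    integral_half_norm_deriv_add_gradient_sq hgrad hgradc hq, hqs0, hqs1, hq0, hq1,
    add_le_add_iff_right]
end

section
/- (Geometric Hopf–Cole, forward part.) Let n ≥ 1, let G : ℝⁿ → Matrix (Fin n) (Fin n) ℝ be a C¹ map with G(x) symmetric for all x, and let V : ℝⁿ → ℝ be C². Assume: (A1) there are real constants c(i,j,k) such that ∂ᵢG^{jk}(x) = c(i,j,k) for all x and all i,j,k; (A2) there are real constants d(i,k) such that ∂ᵢ(Σⱼ G^{jk} ∂ⱼV)(x) = d(i,k) for all x and all i,k; and the Hessian matrix (∂²ᵢⱼV(x))ᵢⱼ is injective (as a linear map ℝⁿ → ℝⁿ) at every x. Let φ : ℝ → ℝⁿ be differentiable and satisfy φ'ᵢ(t) + (1/2) Σ_{j,k}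 c(i,j,k) φⱼ(t) φₖ(t) = Σₖ d(i,k) φₖ(t) for all i and t, and let η : ℝ → ℝⁿ be differentiable with 2 ∂ᵢV(η(t)) = φᵢ(t) for all i and t. Then η is a gradient flow of V: η'ʲ(t) = Σₖ G^{jk}(η(t)) ∂ₖV(η(t)) for all j and t. -/
/-!
Write `a = ∇V(η)` and `B = Hess V(η)`, so that `φ = 2a` and, by the chain rule, `φ' = 2 B η'`.
By the product rule, (A1) and (A2) say `d(i,k) = Σⱼ (c(i,j,k) aⱼ + G^{jk} Bᵢⱼ)`. Substituting
into the equation for `φ`, the quadratic terms in `a` cancel and what remains is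
`B (η' - G a) = 0`; injectivity of the Hessian gives `η' = G a`.
-/

/-- Partial derivative of `F : ℝⁿ → ℝ` in the `i`-th coordinate direction. -/
noncomputable def pd {n : ℕ} (F : (Fin n → ℝ) → ℝ) (i : Fin n) (x : Fin n → ℝ) : ℝ :=
  fderiv ℝ F x (Pi.single i 1)

section PartialDerivatives

variable {n : ℕ}

lemma fderiv_apply_eq_sum_pd (F : (Fin n → ℝ) → ℝ) (x u : Fin n → ℝ) :
    fderiv ℝ F x u = ∑ j, u j * pd F j x := by
  conv_lhs => rw [← Finset.univ_sum_single u, map_sum]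
  refine Finset.sum_congr rfl fun j _ => ?_
  rw [pd, ← smul_eq_mul, ← map_smul, ← Pi.single_smul', smul_eq_mul, mul_one]

lemma contDiff_pd {m : WithTop ℕ∞} {F : (Fin n → ℝ) → ℝ} (hF : ContDiff ℝ (m + 1) F)
    (i : Fin n) : ContDiff ℝ m (pd F i) :=
  (hF.fderiv_right le_rfl).clm_apply contDiff_const

lemma hasDerivAt_comp_eq_sum_pd {F : (Fin n → ℝ) → ℝ} {γ : ℝ → Fin n → ℝ} {γ' : Fin n → ℝ}
    {t : ℝ} (hF : DifferentiableAt ℝ F (γ t)) (hγ : HasDerivAt γ γ' t) :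
    HasDerivAt (fun s => F (γ s)) (∑ j, γ' j * pd F j (γ t)) t := by
  rw [← fderiv_apply_eq_sum_pd]
  exact hF.hasFDerivAt.comp_hasDerivAt t hγ

lemma pd_pd_comm {F : (Fin n → ℝ) → ℝ} {x : Fin n → ℝ} (hF : ContDiffAt ℝ 2 F x)
    (i j : Fin n) : pd (pd F j) i x = pd (pd F i) j x := by
  have hd : DifferentiableAt ℝ (fderiv ℝ F) x :=
    (hF.fderiv_right (m := 1) le_rfl).differentiableAt one_ne_zero
  have hpd : ∀ a b : Fin n,
      pd (pd F b) a x = fderiv ℝ (fderiv ℝ F) x (Pi.single a 1) (Pi.single b 1) := by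
    intro a b
    rw [pd, show pd F b = fun y => fderiv ℝ F y (Pi.single b 1) from rfl,
      fderiv_clm_apply hd (differentiableAt_const _)]
    simp
  rw [hpd, hpd]
  exact hF.isSymmSndFDerivAt (by simp) _ _

lemma pd_sum_mul {ι : Type*} [Fintype ι] {f g : ι → (Fin n → ℝ) → ℝ} {x : Fin n → ℝ}
    (hf : ∀ j, DifferentiableAt ℝ (f j) x) (hg : ∀ j, DifferentiableAt ℝ (g j) x) (i : Fin n) :
    pd (fun y => ∑ j, f j y * g j y) i x
      = ∑ j, (pd (f j) i x * g j x + f j x * pd (g j) i x) := by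
  have hsum : HasFDerivAt (fun y => ∑ j, f j y * g j y) _ x :=
    HasFDerivAt.fun_sum fun j _ => (hf j).hasFDerivAt.mul (hg j).hasFDerivAt
  rw [pd, hsum.fderiv]
  simp only [sum_apply, add_apply, smul_apply, smul_eq_mul, pd]
  exact Finset.sum_congr rfl fun j _ => by ring

end PartialDerivatives

lemma sum_mul_sub_eq_zero_of_riccati {ι : Type*} [Fintype ι] (B G d : ι → ι → ℝ)
    (c : ι → ι → ι → ℝ) (a v : ι → ℝ) (i : ι)
    (hd : ∀ k, d i k = ∑ j, (c i j k * a j + G j k * B i j))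
    (h : 2 * ∑ j, B i j * v j + 1 / 2 * ∑ j, ∑ k, c i j k * (2 * a j) * (2 * a k)
      = ∑ k, d i k * (2 * a k)) :
    ∑ j, B i j * (v j - ∑ k, G j k * a k) = 0 := by
  have hquad : 1 / 2 * ∑ j, ∑ k, c i j k * (2 * a j) * (2 * a k)
      = 2 * ∑ k, ∑ j, c i j k * a j * a k := by
    rw [Finset.sum_comm]
    simp only [Finset.mul_sum]
    exact Finset.sum_congr rfl fun _ _ => Finset.sum_congr rfl fun _ _ => by ring
  have hlin : ∑ k, d i k * (2 * a k)
      = 2 * ∑ k, ∑ j, c i j k * a j * a k + 2 * ∑ j, B i j * ∑ k, G j k * a k := by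
    simp only [hd, Finset.sum_add_distrib, add_mul, Finset.sum_mul, Finset.mul_sum]
    rw [Finset.sum_comm (f := fun k j => G j k * B i j * (2 * a k))]
    congr 1 <;> exact Finset.sum_congr rfl fun _ _ => Finset.sum_congr rfl fun _ _ => by ring
  simp only [mul_sub, Finset.sum_sub_distrib]
  linarith

theorem stmt4_general {n : ℕ}
    (G : (Fin n → ℝ) → Fin n → Fin n → ℝ)
    (hG : ∀ j k, ContDiff ℝ 1 (fun x => G x j k))
    (V : (Fin n → ℝ) → ℝ) (hV : ContDiff ℝ 2 V)
    (c : Fin n → Fin n → Fin n → ℝ)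
    (hA1 : ∀ i j k x, pd (fun y => G y j k) i x = c i j k)
    (dm : Fin n → Fin n → ℝ)
    (hA2 : ∀ i k x, pd (fun y => ∑ j, G y j k * pd V j y) i x = dm i k)
    (hHess : ∀ x, Function.Injective
      (fun u : Fin n → ℝ => fun i => ∑ j, pd (fun y => pd V j y) i x * u j))
    (φ dφ : ℝ → Fin n → ℝ)
    (hφ : ∀ i t, HasDerivAt (fun s => φ s i) (dφ t i) t)
    (hode : ∀ i t, dφ t i + (1/2) * ∑ j, ∑ k, c i j k * φ t j * φ t k
      = ∑ k, dm i k * φ t k)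
    (η dη : ℝ → Fin n → ℝ)
    (hη : ∀ j t, HasDerivAt (fun s => η s j) (dη t j) t)
    (hHC : ∀ i t, 2 * pd V i (η t) = φ t i) :
    ∀ j t, dη t j = ∑ k, G (η t) j k * pd V k (η t) := by
  intro j t
  have hdpd : ∀ k, Differentiable ℝ (pd V k) := fun k =>
    (contDiff_pd hV k).differentiable one_ne_zero
  have hdφ : ∀ i, dφ t i = 2 * ∑ j, pd (pd V j) i (η t) * dη t j := by
    intro i
    have hchain := (hasDerivAt_comp_eq_sum_pd (hdpd i).differentiableAt
      (hasDerivAt_pi.2 fun j => hη j t)).const_mul 2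
    simp only [hHC] at hchain
    refine (hφ i t).unique (hchain.congr_deriv ?_)
    simp only [pd_pd_comm hV.contDiffAt i, mul_comm (dη t _)]
  have hdm : ∀ i k,
      dm i k = ∑ j, (c i j k * pd V j (η t) + G (η t) j k * pd (pd V j) i (η t)) := by
    intro i k
    rw [← hA2 i k (η t),
      pd_sum_mul (fun j => ((hG j k).differentiable one_ne_zero).differentiableAt)
        fun j => (hdpd j).differentiableAt]
    simp only [hA1]
  have hker : (fun i => ∑ j, pd (pd V j) i (η t) * (dη t j - ∑ k, G (η t) j k * pd V k (η t)))
      = fun i => ∑ j, pd (pd V j) i (η t) * 0 := by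
    funext i
    simp only [mul_zero, Finset.sum_const_zero]
    refine sum_mul_sub_eq_zero_of_riccati (fun i j => pd (pd V j) i (η t)) (G (η t)) dm c
      (fun k => pd V k (η t)) (dη t) i (hdm i) ?_
    simpa only [hdφ, hHC] using hode i t
  exact sub_eq_zero.1 (congrFun (hHess (η t) hker) j)

/-- Geometric Hopf–Cole, forward part: under assumptions (A1),
(A2) and injectivity of the Hessian of `V`, if `φ` solves the coordinate
Euler–Lagrange (HJB-type) equation and `η` satisfies `2 ∂ᵢV(η) = φᵢ`, then `η`
is a gradient flow of `V`: `η'ʲ = Σₖ G^{jk}(η) ∂ₖV(η)`. -/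
theorem stmt4 {n : ℕ} (hn : 1 ≤ n)
    (G : (Fin n → ℝ) → Fin n → Fin n → ℝ)
    (hG : ∀ j k, ContDiff ℝ 1 (fun x => G x j k))
    (hGsymm : ∀ x j k, G x j k = G x k j)
    (V : (Fin n → ℝ) → ℝ) (hV : ContDiff ℝ 2 V)
    (c : Fin n → Fin n → Fin n → ℝ)
    (hA1 : ∀ i j k x, pd (fun y => G y j k) i x = c i j k)
    (dm : Fin n → Fin n → ℝ)
    (hA2 : ∀ i k x, pd (fun y => ∑ j, G y j k * pd V j y) i x = dm i k)
    (hHess : ∀ x, Function.Injective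
      (fun u : Fin n → ℝ => fun i => ∑ j, pd (fun y => pd V j y) i x * u j))
    (φ dφ : ℝ → Fin n → ℝ)
    (hφ : ∀ i t, HasDerivAt (fun s => φ s i) (dφ t i) t)
    (hode : ∀ i t, dφ t i + (1/2) * ∑ j, ∑ k, c i j k * φ t j * φ t k
      = ∑ k, dm i k * φ t k)
    (η dη : ℝ → Fin n → ℝ)
    (hη : ∀ j t, HasDerivAt (fun s => η s j) (dη t j) t)
    (hHC : ∀ i t, 2 * pd V i (η t) = φ t i) :
    ∀ j t, dη t j = ∑ k, G (η t) j k * pd V k (η t) :=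
  stmt4_general G hG V hV c hA1 dm hA2 hHess φ dφ hφ hode η dη hη hHC
end

section
/- (Hopf–Cole for the Schrödinger bridge, second component.) Let γ > 0, d ≥ 1, and let ρ, φ : ℝ × ℝᵈ → ℝ be C² with ρ(t,x) > 0 for all (t,x). Suppose ∂ₜφ + (1/2)‖∇ₓφ‖² = −γ Δₓφ and ∂ₜρ + divₓ(ρ ∇ₓφ) = γ Δₓρ hold everywhere. Then η*(t,x) := ρ(t,x) exp(−φ(t,x)/(2γ)) satisfies the forward heat equation ∂ₜη*(t,x) = γ Δₓη*(t,x) for all (t,x). -/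
/-!
Write `η* = ρ e^{cφ}` with `c = -1/(2γ)`. The product and chain rules give
`∂ₜη* = e^{cφ} (∂ₜρ + c ρ ∂ₜφ)` and
`Δₓη* = e^{cφ} (Δₓρ + 2c ∇ₓρ·∇ₓφ + c² ρ ‖∇ₓφ‖² + c ρ Δₓφ)`,
so that, since `2cγ = -1`, `∂ₜη* - γΔₓη*` is `e^{cφ}` times the Fokker–Planck residual
minus `ρ/(2γ)` times the HJB residual, and both residuals vanish.
-/

/-- Time derivative `∂ₜF` of `F : ℝ × ℝᵈ → ℝ`. -/
noncomputable def pt {d : ℕ} (F : ℝ × (Fin d → ℝ) → ℝ) (p : ℝ × (Fin d → ℝ)) : ℝ :=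
  fderiv ℝ F p (1, 0)

/-- Spatial partial derivative `∂ᵢF` of `F : ℝ × ℝᵈ → ℝ` in the `i`-th
coordinate direction. -/
noncomputable def px {d : ℕ} (F : ℝ × (Fin d → ℝ) → ℝ) (i : Fin d)
    (p : ℝ × (Fin d → ℝ)) : ℝ :=
  fderiv ℝ F p (0, Pi.single i 1)

open Real

section DirectionalDerivative

variable {E : Type*} [NormedAddCommGroup E] [NormedSpace ℝ E] {F G ρ φ : E → ℝ} {p : E}

theorem fderiv_mul_apply_of_differentiableAt (hF : DifferentiableAt ℝ F p)
    (hG : DifferentiableAt ℝ G p) (v : E) :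
    fderiv ℝ (fun q => F q * G q) p v = fderiv ℝ F p v * G p + F p * fderiv ℝ G p v := by
  rw [fderiv_fun_mul hF hG]
  simp only [add_apply, smul_apply, smul_eq_mul]
  ring

theorem fderiv_exp_const_mul_apply (c : ℝ) (hF : DifferentiableAt ℝ F p) (v : E) :
    fderiv ℝ (fun q => exp (c * F q)) p v = exp (c * F p) * (c * fderiv ℝ F p v) := by
  rw [fderiv_exp (hF.const_mul c), fderiv_const_mul hF]
  simp only [smul_apply, smul_eq_mul]

theorem ContDiff.differentiable_fderiv_apply (hF : ContDiff ℝ 2 F) (v : E) :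
    Differentiable ℝ (fun q => fderiv ℝ F q v) :=
  ((hF.fderiv_right (m := 1) (by norm_num)).clm_apply contDiff_const).differentiable
    (by norm_num)

theorem fderiv_mul_exp_const_mul_apply (c : ℝ) (hρ : DifferentiableAt ℝ ρ p)
    (hφ : DifferentiableAt ℝ φ p) (v : E) :
    fderiv ℝ (fun q => ρ q * exp (c * φ q)) p v
      = exp (c * φ p) * (fderiv ℝ ρ p v + c * ρ p * fderiv ℝ φ p v) := by
  rw [fderiv_mul_apply_of_differentiableAt hρ ((hφ.const_mul c).exp),
    fderiv_exp_const_mul_apply c hφ]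
  ring

theorem fderiv_fderiv_mul_exp_const_mul_apply (c : ℝ) (hρ : ContDiff ℝ 2 ρ)
    (hφ : ContDiff ℝ 2 φ) (v : E) :
    fderiv ℝ (fun q => fderiv ℝ (fun q' => ρ q' * exp (c * φ q')) q v) p v
      = exp (c * φ p) * (fderiv ℝ (fun q => fderiv ℝ ρ q v) p v
          + 2 * c * fderiv ℝ ρ p v * fderiv ℝ φ p v
          + c ^ 2 * ρ p * fderiv ℝ φ p v ^ 2
          + c * ρ p * fderiv ℝ (fun q => fderiv ℝ φ q v) p v) := by
  have hρ1 : Differentiable ℝ ρ := hρ.differentiable (by norm_num)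
  have hφ1 : Differentiable ℝ φ := hφ.differentiable (by norm_num)
  have hDρ := hρ.differentiable_fderiv_apply v p
  have hDφ := hφ.differentiable_fderiv_apply v p
  have hfirst : (fun q => fderiv ℝ (fun q' => ρ q' * exp (c * φ q')) q v)
      = fun q => exp (c * φ q) * (fderiv ℝ ρ q v + c * (ρ q * fderiv ℝ φ q v)) := by
    funext q
    rw [fderiv_mul_exp_const_mul_apply c (hρ1 q) (hφ1 q), mul_assoc c]
  have hρDφ : DifferentiableAt ℝ (fun q => ρ q * fderiv ℝ φ q v) p := (hρ1 p).mul hDφ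
  have hcρDφ : DifferentiableAt ℝ (fun q => c * (ρ q * fderiv ℝ φ q v)) p := hρDφ.const_mul c
  have hexp : DifferentiableAt ℝ (fun q => exp (c * φ q)) p := ((hφ1 p).const_mul c).exp
  rw [hfirst, fderiv_mul_apply_of_differentiableAt hexp (hDρ.fun_add hcρDφ),
    fderiv_exp_const_mul_apply c (hφ1 p), fderiv_fun_add hDρ hcρDφ,
    add_apply, fderiv_const_mul hρDφ, smul_apply,
    smul_eq_mul, fderiv_mul_apply_of_differentiableAt (hρ1 p) hDφ]
  ring

end DirectionalDerivative

section SpaceTime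

variable {d : ℕ} {ρ φ : ℝ × (Fin d → ℝ) → ℝ}

theorem pt_mul_exp_const_mul (c : ℝ) (hρ : Differentiable ℝ ρ) (hφ : Differentiable ℝ φ)
    (p : ℝ × (Fin d → ℝ)) :
    pt (fun q => ρ q * exp (c * φ q)) p = exp (c * φ p) * (pt ρ p + c * ρ p * pt φ p) :=
  fderiv_mul_exp_const_mul_apply c (hρ p) (hφ p) _

theorem sum_px_px_mul_exp_const_mul (c : ℝ) (hρ : ContDiff ℝ 2 ρ) (hφ : ContDiff ℝ 2 φ)
    (p : ℝ × (Fin d → ℝ)) :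
    ∑ i, px (px (fun q => ρ q * exp (c * φ q)) i) i p
      = exp (c * φ p) * (∑ i, px (px ρ i) i p + 2 * c * ∑ i, px ρ i p * px φ i p
          + c ^ 2 * ρ p * ∑ i, px φ i p ^ 2 + c * ρ p * ∑ i, px (px φ i) i p) := by
  have hterm : ∀ i, px (px (fun q => ρ q * exp (c * φ q)) i) i p
      = exp (c * φ p) * (px (px ρ i) i p + 2 * c * px ρ i p * px φ i p
          + c ^ 2 * ρ p * px φ i p ^ 2 + c * ρ p * px (px φ i) i p) :=
    fun i => fderiv_fderiv_mul_exp_const_mul_apply c hρ hφ _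
  simp only [hterm, Finset.mul_sum, ← Finset.sum_add_distrib]
  exact Finset.sum_congr rfl fun i _ => by ring

theorem sum_px_mul_px (hρ : Differentiable ℝ ρ) (hφ : ContDiff ℝ 2 φ) (p : ℝ × (Fin d → ℝ)) :
    ∑ i, px (fun q => ρ q * px φ i q) i p
      = ∑ i, px ρ i p * px φ i p + ρ p * ∑ i, px (px φ i) i p := by
  have hterm : ∀ i, px (fun q => ρ q * px φ i q) i p
      = px ρ i p * px φ i p + ρ p * px (px φ i) i p :=
    fun i => fderiv_mul_apply_of_differentiableAt (hρ p) (hφ.differentiable_fderiv_apply _ p) _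
  simp only [hterm, Finset.mul_sum, Finset.sum_add_distrib]

end SpaceTime

theorem stmt10_general (γ : ℝ) (hγ : 0 < γ) {d : ℕ}
    (ρ φ : ℝ × (Fin d → ℝ) → ℝ) (hρ : ContDiff ℝ 2 ρ) (hφ : ContDiff ℝ 2 φ)
    (hHJB : ∀ p, pt φ p + (1/2) * ∑ i, (px φ i p)^2
      = -γ * ∑ i, px (px φ i) i p)
    (hFP : ∀ p, pt ρ p + ∑ i, px (fun q => ρ q * px φ i q) i p
      = γ * ∑ i, px (px ρ i) i p) :
    ∀ p, pt (fun q => ρ q * Real.exp (-φ q / (2*γ))) p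
      = γ * ∑ i, px (px (fun q => ρ q * Real.exp (-φ q / (2*γ))) i) i p := by
  intro p
  set c := -(2 * γ)⁻¹ with hc
  have hcγ : c * γ = -1 / 2 := by rw [hc]; field_simp
  have hη : (fun q => ρ q * exp (-φ q / (2 * γ))) = fun q => ρ q * exp (c * φ q) := by
    funext q
    rw [hc, neg_div, div_eq_inv_mul, neg_mul]
  have hρ1 : Differentiable ℝ ρ := hρ.differentiable (by norm_num)
  have hFP' := hFP p
  rw [sum_px_mul_px hρ1 hφ] at hFP'
  rw [hη, pt_mul_exp_const_mul c hρ1 (hφ.differentiable (by norm_num)),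
    sum_px_px_mul_exp_const_mul c hρ hφ]
  linear_combination exp (c * φ p) * hFP' + exp (c * φ p) * c * ρ p * hHJB p
    - exp (c * φ p) * (2 * ∑ i, px ρ i p * px φ i p + c * ρ p * ∑ i, px φ i p ^ 2
      + 2 * ρ p * ∑ i, px (px φ i) i p) * hcγ

/-- Hopf–Cole for the Schrödinger bridge, second component: if
`ρ > 0` and `φ` are C², `φ` solves the HJB equation and `ρ` solves the
Fokker–Planck equation `∂ₜρ + divₓ(ρ∇ₓφ) = γΔₓρ`, then `η* = ρ exp(−φ/(2γ))`
solves the forward heat equation `∂ₜη* = γΔₓη*`. -/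
theorem stmt10 (γ : ℝ) (hγ : 0 < γ) {d : ℕ} (hd : 1 ≤ d)
    (ρ φ : ℝ × (Fin d → ℝ) → ℝ) (hρ : ContDiff ℝ 2 ρ) (hφ : ContDiff ℝ 2 φ)
    (hpos : ∀ p, 0 < ρ p)
    (hHJB : ∀ p, pt φ p + (1/2) * ∑ i, (px φ i p)^2
      = -γ * ∑ i, px (px φ i) i p)
    (hFP : ∀ p, pt ρ p + ∑ i, px (fun q => ρ q * px φ i q) i p
      = γ * ∑ i, px (px ρ i) i p) :
    ∀ p, pt (fun q => ρ q * Real.exp (-φ q / (2*γ))) p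
      = γ * ∑ i, px (px (fun q => ρ q * Real.exp (-φ q / (2*γ))) i) i p :=
  stmt10_general γ hγ ρ φ hρ hφ hHJB hFP
end

section
/- (Pointwise form of the equivalence between the Schrödinger bridge and Yasue actions.) Let γ ∈ ℝ, d ≥ 1, let ρ : ℝ × ℝᵈ → ℝ be C² with ρ(t,x) > 0 for all (t,x), and let v : ℝ × ℝᵈ → ℝᵈ be C¹ such that the continuity equation ∂ₜρ + divₓ(ρ v) = 0 holds everywhere. Define b(t,x) := v(t,x) + γ ∇ₓ(ln ρ)(t,x). Then pointwise, for all (t,x): (1/2)‖b‖² ρ = (1/2)‖v‖² ρ + (γ²/2) ‖∇ₓρ‖²/ρ + γ ∂ₜ(ρ ln ρ) + γ divₓ( ρ (ln ρ + 1) v ). -/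
open Real

section
variable {E : Type*} [NormedAddCommGroup E] [NormedSpace ℝ E] {ρ u : E → ℝ} {p : E}

theorem fderiv_log_apply (hρ : DifferentiableAt ℝ ρ p) (hp : ρ p ≠ 0) (w : E) :
    fderiv ℝ (fun q => log (ρ q)) p w = fderiv ℝ ρ p w / ρ p := by
  rw [fderiv.log hρ hp, smul_apply, smul_eq_mul, inv_mul_eq_div]

theorem fderiv_mul_log_apply (hρ : DifferentiableAt ℝ ρ p) (hp : ρ p ≠ 0) (w : E) :
    fderiv ℝ (fun q => ρ q * log (ρ q)) p w = (log (ρ p) + 1) * fderiv ℝ ρ p w := by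
  rw [fderiv_fun_mul hρ (hρ.log hp)]
  simp only [add_apply, smul_apply, smul_eq_mul, fderiv_log_apply hρ hp]
  field_simp
  ring

theorem fderiv_mul_log_add_one_mul_apply (hρ : DifferentiableAt ℝ ρ p)
    (hu : DifferentiableAt ℝ u p) (hp : ρ p ≠ 0) (w : E) :
    fderiv ℝ (fun q => ρ q * (log (ρ q) + 1) * u q) p w
      = (log (ρ p) + 1) * fderiv ℝ (fun q => ρ q * u q) p w + u p * fderiv ℝ ρ p w := by
  have hlog : DifferentiableAt ℝ (fun q => log (ρ q) + 1) p := (hρ.log hp).add_const 1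
  rw [fderiv_fun_mul (hρ.fun_mul hlog) hu, fderiv_fun_mul hρ hlog, fderiv_fun_mul hρ hu]
  simp only [add_apply, smul_apply, smul_eq_mul,
    fderiv_add_const, fderiv_log_apply hρ hp]
  field_simp
  ring
end

theorem half_sq_drift_mul_eq {ι : Type*} [Fintype ι] (γ l r T : ℝ) (V G D : ι → ℝ)
    (hr : r ≠ 0) (hcont : T + ∑ i, D i = 0) :
    (1/2) * (∑ i, (V i + γ * (G i / r))^2) * r
      = (1/2) * (∑ i, (V i)^2) * r + (γ^2/2) * (∑ i, (G i)^2) / r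
        + γ * ((l + 1) * T) + γ * ∑ i, ((l + 1) * D i + V i * G i) := by
  have hsq : ∑ i, (V i + γ * (G i / r))^2
      = ∑ i, (V i)^2 + 2 * γ / r * ∑ i, V i * G i + γ^2 / r^2 * ∑ i, (G i)^2 := by
    rw [Finset.mul_sum, Finset.mul_sum, ← Finset.sum_add_distrib, ← Finset.sum_add_distrib]
    exact Finset.sum_congr rfl fun i _ => by ring
  have hT : T = -∑ i, D i := by linarith
  rw [hsq, Finset.sum_add_distrib, ← Finset.mul_sum, hT]
  field_simp
  ring

theorem stmt13_general (γ : ℝ) {d : ℕ}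
    (ρ : ℝ × (Fin d → ℝ) → ℝ) (hρ : ContDiff ℝ 2 ρ) (hpos : ∀ p, 0 < ρ p)
    (v : ℝ × (Fin d → ℝ) → Fin d → ℝ) (hv : ∀ i, ContDiff ℝ 1 (fun p => v p i))
    (hcont : ∀ p, pt ρ p + ∑ i, px (fun q => ρ q * v q i) i p = 0)
    (b : ℝ × (Fin d → ℝ) → Fin d → ℝ)
    (hb : ∀ p i, b p i = v p i + γ * px (fun q => Real.log (ρ q)) i p) :
    ∀ p, (1/2) * (∑ i, (b p i)^2) * ρ p
      = (1/2) * (∑ i, (v p i)^2) * ρ p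
        + (γ^2/2) * (∑ i, (px ρ i p)^2) / ρ p
        + γ * pt (fun q => ρ q * Real.log (ρ q)) p
        + γ * ∑ i, px (fun q => ρ q * (Real.log (ρ q) + 1) * v q i) i p := by
  intro p
  have hρp : ρ p ≠ 0 := (hpos p).ne'
  have hρd : DifferentiableAt ℝ ρ p := (hρ.differentiable two_ne_zero).differentiableAt
  have hvd (i : Fin d) : DifferentiableAt ℝ (fun q => v q i) p :=
    ((hv i).differentiable one_ne_zero).differentiableAt
  have hdrift (i : Fin d) : b p i = v p i + γ * (px ρ i p / ρ p) := by
    rw [hb, px, fderiv_log_apply hρd hρp]; rfl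
  have hflux (i : Fin d) : px (fun q => ρ q * (Real.log (ρ q) + 1) * v q i) i p
      = (log (ρ p) + 1) * px (fun q => ρ q * v q i) i p + v p i * px ρ i p :=
    fderiv_mul_log_add_one_mul_apply hρd (hvd i) hρp _
  rw [Finset.sum_congr rfl fun i _ => congrArg (· ^ 2) (hdrift i),
    Finset.sum_congr rfl fun i _ => hflux i, pt, fderiv_mul_log_apply hρd hρp]
  exact half_sq_drift_mul_eq γ (log (ρ p)) (ρ p) (pt ρ p) (v p) (px ρ · p)
    (fun i => px (fun q => ρ q * v q i) i p) hρp (hcont p)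

/-- Pointwise form of the equivalence between the Schrödinger
bridge and Yasue actions: if `ρ > 0` is C², `v` is C¹ and the continuity
equation `∂ₜρ + divₓ(ρv) = 0` holds, then with `b = v + γ∇ₓ(ln ρ)`, pointwise
`(1/2)‖b‖²ρ = (1/2)‖v‖²ρ + (γ²/2)‖∇ₓρ‖²/ρ + γ∂ₜ(ρ ln ρ) + γ divₓ(ρ(ln ρ + 1)v)`. -/
theorem stmt13 (γ : ℝ) {d : ℕ} (hd : 1 ≤ d)
    (ρ : ℝ × (Fin d → ℝ) → ℝ) (hρ : ContDiff ℝ 2 ρ) (hpos : ∀ p, 0 < ρ p)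
    (v : ℝ × (Fin d → ℝ) → Fin d → ℝ) (hv : ∀ i, ContDiff ℝ 1 (fun p => v p i))
    (hcont : ∀ p, pt ρ p + ∑ i, px (fun q => ρ q * v q i) i p = 0)
    (b : ℝ × (Fin d → ℝ) → Fin d → ℝ)
    (hb : ∀ p i, b p i = v p i + γ * px (fun q => Real.log (ρ q)) i p) :
    ∀ p, (1/2) * (∑ i, (b p i)^2) * ρ p
      = (1/2) * (∑ i, (v p i)^2) * ρ p
        + (γ^2/2) * (∑ i, (px ρ i p)^2) / ρ p
        + γ * pt (fun q => ρ q * Real.log (ρ q)) p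
        + γ * ∑ i, px (fun q => ρ q * (Real.log (ρ q) + 1) * v q i) i p :=
  stmt13_general γ ρ hρ hpos v hv hcont b hb
end

section
/- (Consistency of the Euler–Lagrange equations of the optimal control and mechanics problems, Euclidean case.) Let E be a finite-dimensional real inner product space and V : E → ℝ a C² function with gradient ∇V and second derivative D²V. Suppose q, b : ℝ → E are differentiable with q'(t) = b(t) − ∇V(q(t)) and b'(t) = D²V(q(t))(b(t)) for all t. Then q is twice differentiable and q''(t) = D²V(q(t))(∇V(q(t))) = ∇( x ↦ (1/2)‖∇V(x)‖² )(q(t)) for all t. -/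
/-!
Differentiating `q' = b - ∇V(q)` and substituting `b' = D²V(q) b` gives
`q'' = D²V(q) b - D²V(q)(b - ∇V(q)) = D²V(q)(∇V(q))`. By the chain rule the gradient of `½‖∇V‖²`
at `x` is `D²V(x)* ∇V(x)`, and `D²V(x)` is self-adjoint by symmetry of second derivatives.
-/

section

variable {E : Type*} [NormedAddCommGroup E] [InnerProductSpace ℝ E]

theorem isSymmetric_of_hasFDerivAt_gradient {V : E → ℝ} {gradV : E → E} {A : E →L[ℝ] E} {x : E}
    (hgrad : ∀ y, HasFDerivAt V (innerSL ℝ (gradV y)) y) (hA : HasFDerivAt gradV A x) :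
    (A : E →ₗ[ℝ] E).IsSymmetric := by
  intro v w
  have hinner : HasFDerivAt (fun y => innerSL ℝ (gradV y)) ((innerSL ℝ).comp A) x :=
    (innerSL ℝ).hasFDerivAt.comp x hA
  have := second_derivative_symmetric hgrad hinner w v
  simpa [real_inner_comm] using this.symm

theorem HasFDerivAt.half_norm_sq_of_isSymmetric {f : E → E} {A : E →L[ℝ] E} {x : E}
    (hf : HasFDerivAt f A x) (hA : (A : E →ₗ[ℝ] E).IsSymmetric) :
    HasFDerivAt (fun y => (1 / 2) * ‖f y‖ ^ 2) (innerSL ℝ (A (f x))) x := by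
  refine (hf.norm_sq.const_mul (1 / 2 : ℝ)).congr_fderiv ?_
  ext v
  simpa using (hA (f x) v).symm

end

theorem hasDerivAt_sub_comp_of_hasDerivAt {F : Type*} [NormedAddCommGroup F] [NormedSpace ℝ F]
    {g : F → F} {D : F → F →L[ℝ] F} {q b : ℝ → F} {t : ℝ}
    (hg : HasFDerivAt g (D (q t)) (q t)) (hq : HasDerivAt q (b t - g (q t)) t)
    (hb : HasDerivAt b (D (q t) (b t)) t) :
    HasDerivAt (fun s => b s - g (q s)) (D (q t) (g (q t))) t := by
  refine (hb.sub (hg.comp_hasDerivAt t hq)).congr_deriv ?_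
  rw [map_sub, sub_sub_cancel]

theorem stmt14_general {E : Type*} [NormedAddCommGroup E] [InnerProductSpace ℝ E]
    (V : E → ℝ)
    (gradV : E → E) (hgrad : ∀ x, HasFDerivAt V (innerSL ℝ (gradV x)) x)
    (D2V : E → E →L[ℝ] E) (hD2V : ∀ x, HasFDerivAt gradV (D2V x) x)
    (q b : ℝ → E)
    (hq : ∀ t, HasDerivAt q (b t - gradV (q t)) t)
    (hb : ∀ t, HasDerivAt b (D2V (q t) (b t)) t) :
    ∀ t, HasDerivAt (fun s => b s - gradV (q s)) (D2V (q t) (gradV (q t))) t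
      ∧ HasFDerivAt (fun x => (1/2) * ‖gradV x‖^2)
          (innerSL ℝ (D2V (q t) (gradV (q t)))) (q t) := fun t =>
  ⟨hasDerivAt_sub_comp_of_hasDerivAt (hD2V (q t)) (hq t) (hb t),
    (hD2V (q t)).half_norm_sq_of_isSymmetric
      (isSymmetric_of_hasFDerivAt_gradient hgrad (hD2V (q t)))⟩

/-- Consistency of the Euler–Lagrange equations of the optimal
control and mechanics problems, Euclidean case: if `q' = b − ∇V(q)` and
`b' = D²V(q)(b)`, then `q` is twice differentiable with
`q'' = D²V(q)(∇V(q)) = ∇((1/2)‖∇V‖²)(q)`. -/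
theorem stmt14 {E : Type*} [NormedAddCommGroup E] [InnerProductSpace ℝ E]
    [FiniteDimensional ℝ E]
    (V : E → ℝ) (hV : ContDiff ℝ 2 V)
    (gradV : E → E) (hgrad : ∀ x, HasFDerivAt V (innerSL ℝ (gradV x)) x)
    (D2V : E → E →L[ℝ] E) (hD2V : ∀ x, HasFDerivAt gradV (D2V x) x)
    (q b : ℝ → E)
    (hq : ∀ t, HasDerivAt q (b t - gradV (q t)) t)
    (hb : ∀ t, HasDerivAt b (D2V (q t) (b t)) t) :
    ∀ t, HasDerivAt (fun s => b s - gradV (q s)) (D2V (q t) (gradV (q t))) t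
      ∧ HasFDerivAt (fun x => (1/2) * ‖gradV x‖^2)
          (innerSL ℝ (D2V (q t) (gradV (q t)))) (q t) :=
  stmt14_general V gradV hgrad D2V hD2V q b hq hb
end

section
/- (Solutions of the geometric Euler–Lagrange equation are critical points of the mechanics action, Euclidean case.) Let E be a finite-dimensional real inner product space, V : E → ℝ a C² function with gradient ∇V, and q : ℝ → E a C² path satisfying q''(t) = D²V(q(t))(∇V(q(t))) for all t ∈ [0,1]. Then for every C² variation h : ℝ → E with h(0) = 0 and h(1) = 0, the function ε ↦ ∫₀¹ ( (1/2)‖q'(t) + ε h'(t)‖² + (1/2)‖∇V(q(t) + ε h(t))‖² ) dt is differentiable at ε = 0 with derivative equal to 0. -/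
/-!
Differentiating under the integral sign (legitimate since everything is jointly continuous in
`(ε, t)` on a compact set), the first variation is
`∫₀¹ ⟪q', h'⟫ + ⟪∇V(q), D²V(q) h⟫`. Since `D²V(q)` is symmetric, the second term is
`⟪D²V(q) ∇V(q), h⟫ = ⟪q'', h⟫` by the Euler–Lagrange equation, so the integrand is the derivative
of `t ↦ ⟪q'(t), h(t)⟫`, whose boundary values vanish because `h(0) = h(1) = 0`.
-/

open RealInnerProductSpace Set Function

theorem hasDerivAt_intervalIntegral_of_continuous {G : Type*} [NormedAddCommGroup G]
    [NormedSpace ℝ G] [CompleteSpace G] {F F' : ℝ → ℝ → G} {a b ε₀ : ℝ}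
    (hF : ∀ ε, Continuous (F ε)) (hF' : Continuous (uncurry F'))
    (hderiv : ∀ ε t, HasDerivAt (F · t) (F' ε t) ε) :
    HasDerivAt (fun ε => ∫ t in a..b, F ε t) (∫ t in a..b, F' ε₀ t) ε₀ := by
  obtain ⟨C, hC⟩ : ∃ C, ∀ p ∈ Metric.closedBall ε₀ 1 ×ˢ uIcc a b, ‖uncurry F' p‖ ≤ C :=
    ((isCompact_closedBall ε₀ 1).prod isCompact_uIcc).exists_bound_of_continuousOn
      hF'.continuousOn
  refine (intervalIntegral.hasDerivAt_integral_of_dominated_loc_of_deriv_le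
    (bound := fun _ => C) (Metric.ball_mem_nhds ε₀ one_pos)
    (.of_forall fun ε => (hF ε).aestronglyMeasurable) ((hF ε₀).intervalIntegrable a b)
    (hF'.comp (Continuous.prodMk_right ε₀)).aestronglyMeasurable ?_
    intervalIntegrable_const (.of_forall fun t _ ε _ => hderiv ε t)).2
  exact .of_forall fun t ht ε hε =>
    hC (ε, t) ⟨Metric.ball_subset_closedBall hε, uIoc_subset_uIcc ht⟩

section Gradient

variable {E : Type*} [NormedAddCommGroup E] [InnerProductSpace ℝ E]

theorem isometry_innerSL_comp :
    Isometry fun A : E →L[ℝ] E => (innerSL ℝ).comp A :=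
  AddMonoidHomClass.isometry_of_norm (ContinuousLinearMap.compL ℝ E E (E →L[ℝ] ℝ) (innerSL ℝ))
    fun A => ContinuousLinearMap.opNorm_ext _ _ fun v => innerSL_apply_norm ℝ (A v)

variable {V : E → ℝ} {gradV : E → E} {D2V : E → E →L[ℝ] E}

theorem continuous_hessian (hV : ContDiff ℝ 2 V)
    (hgrad : ∀ x, HasFDerivAt V (innerSL ℝ (gradV x)) x)
    (hD2V : ∀ x, HasFDerivAt gradV (D2V x) x) : Continuous D2V := by
  have hfderiv : fderiv ℝ V = fun x => innerSL ℝ (gradV x) := funext fun x => (hgrad x).fderiv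
  have hfderiv2 : fderiv ℝ (fderiv ℝ V) = fun x => (innerSL ℝ).comp (D2V x) := by
    rw [hfderiv]
    exact funext fun x => ((innerSL ℝ).hasFDerivAt.comp x (hD2V x)).fderiv
  rw [← isometry_innerSL_comp.comp_continuous_iff]
  show Continuous fun x => (innerSL ℝ).comp (D2V x)
  rw [← hfderiv2]
  exact (hV.fderiv_right (m := 1) le_rfl).continuous_fderiv one_ne_zero

theorem inner_hessian_comm (hgrad : ∀ x, HasFDerivAt V (innerSL ℝ (gradV x)) x)
    (hD2V : ∀ x, HasFDerivAt gradV (D2V x) x) (x u v : E) :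
    ⟪D2V x u, v⟫ = ⟪u, D2V x v⟫ := by
  have hx := (innerSL ℝ (E := E)).hasFDerivAt.comp x (hD2V x)
  rw [← real_inner_comm u]
  exact second_derivative_symmetric hgrad hx u v

theorem hasDerivAt_action_integrand (hD2V : ∀ x, HasFDerivAt gradV (D2V x) x)
    (v w x y : E) (ε : ℝ) :
    HasDerivAt (fun ε : ℝ => (1/2) * ‖v + ε • w‖^2 + (1/2) * ‖gradV (x + ε • y)‖^2)
      (⟪v + ε • w, w⟫ + ⟪gradV (x + ε • y), D2V (x + ε • y) y⟫) ε := by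
  have hline : ∀ a b : E, HasDerivAt (fun ε : ℝ => a + ε • b) b ε := fun a b => by
    simpa using ((hasDerivAt_id ε).smul_const b).const_add a
  have hkin := (hline v w).norm_sq.const_mul (1/2 : ℝ)
  have hpot := ((hD2V _).comp_hasDerivAt ε (hline x y)).norm_sq.const_mul (1/2 : ℝ)
  exact (hkin.add hpot).congr_deriv (by simp only [comp_apply]; ring)

theorem hasDerivAt_inner_deriv_of_euler_lagrange
    (hgrad : ∀ x, HasFDerivAt V (innerSL ℝ (gradV x)) x)
    (hD2V : ∀ x, HasFDerivAt gradV (D2V x) x) {q h : ℝ → E} {t : ℝ}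
    (hq : DifferentiableAt ℝ (deriv q) t) (hh : DifferentiableAt ℝ h t)
    (hEL : deriv (deriv q) t = D2V (q t) (gradV (q t))) :
    HasDerivAt (fun s => ⟪deriv q s, h s⟫)
      (⟪deriv q t, deriv h t⟫ + ⟪gradV (q t), D2V (q t) (h t)⟫) t := by
  refine (hq.hasDerivAt.inner ℝ hh.hasDerivAt).congr_deriv ?_
  rw [hEL, inner_hessian_comm hgrad hD2V, add_comm]

end Gradient

theorem stmt15_general {E : Type*} [NormedAddCommGroup E] [InnerProductSpace ℝ E]
    (V : E → ℝ) (hV : ContDiff ℝ 2 V)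
    (gradV : E → E) (hgrad : ∀ x, HasFDerivAt V (innerSL ℝ (gradV x)) x)
    (D2V : E → E →L[ℝ] E) (hD2V : ∀ x, HasFDerivAt gradV (D2V x) x)
    (q : ℝ → E) (hq : ContDiff ℝ 2 q)
    (hEL : ∀ t ∈ Set.Icc (0:ℝ) 1, deriv (deriv q) t = D2V (q t) (gradV (q t))) :
    ∀ h : ℝ → E, ContDiff ℝ 2 h → h 0 = 0 → h 1 = 0 →
      HasDerivAt (fun ε : ℝ => ∫ t in (0:ℝ)..1,
        ((1/2) * ‖deriv q t + ε • deriv h t‖^2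
          + (1/2) * ‖gradV (q t + ε • h t)‖^2)) 0 0 := by
  intro h hh h0 h1
  have hq' : ContDiff ℝ 1 (deriv q) := hq.deriv'
  have hh' : ContDiff ℝ 1 (deriv h) := hh.deriv'
  have hgradV : Continuous gradV := Differentiable.continuous fun x => (hD2V x).differentiableAt
  have hD2Vc : Continuous D2V := continuous_hessian hV hgrad hD2V
  have hfirst := hasDerivAt_intervalIntegral_of_continuous (a := 0) (b := 1) (ε₀ := 0)
    (fun ε => by fun_prop) (by fun_prop)
    fun ε t => hasDerivAt_action_integrand hD2V (deriv q t) (deriv h t) (q t) (h t) ε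
  suffices hvanish :
      ∫ t in (0:ℝ)..1, (⟪deriv q t, deriv h t⟫ + ⟪gradV (q t), D2V (q t) (h t)⟫) = 0 by
    simpa only [zero_smul, add_zero, hvanish] using hfirst
  rw [intervalIntegral.integral_eq_sub_of_hasDerivAt (f := fun t => ⟪deriv q t, h t⟫)]
  · simp [h0, h1]
  · intro t ht
    rw [uIcc_of_le zero_le_one] at ht
    exact hasDerivAt_inner_deriv_of_euler_lagrange hgrad hD2V
      (hq'.differentiable one_ne_zero t) (hh.differentiable two_ne_zero t) (hEL t ht)
  · exact Continuous.intervalIntegrable (by fun_prop) _ _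

/-- Solutions of the geometric Euler–Lagrange equation are
critical points of the mechanics action, Euclidean case: if the C² path `q`
satisfies `q'' = D²V(q)(∇V(q))` on `[0,1]`, then for every C² variation `h`
vanishing at `0` and `1`, the derivative at `ε = 0` of
`ε ↦ ∫₀¹ ((1/2)‖q' + εh'‖² + (1/2)‖∇V(q + εh)‖²)` is `0`. -/
theorem stmt15 {E : Type*} [NormedAddCommGroup E] [InnerProductSpace ℝ E]
    [FiniteDimensional ℝ E]
    (V : E → ℝ) (hV : ContDiff ℝ 2 V)
    (gradV : E → E) (hgrad : ∀ x, HasFDerivAt V (innerSL ℝ (gradV x)) x)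
    (D2V : E → E →L[ℝ] E) (hD2V : ∀ x, HasFDerivAt gradV (D2V x) x)
    (q : ℝ → E) (hq : ContDiff ℝ 2 q)
    (hEL : ∀ t ∈ Set.Icc (0:ℝ) 1, deriv (deriv q) t = D2V (q t) (gradV (q t))) :
    ∀ h : ℝ → E, ContDiff ℝ 2 h → h 0 = 0 → h 1 = 0 →
      HasDerivAt (fun ε : ℝ => ∫ t in (0:ℝ)..1,
        ((1/2) * ‖deriv q t + ε • deriv h t‖^2
          + (1/2) * ‖gradV (q t + ε • h t)‖^2)) 0 0 :=
  stmt15_general V hV gradV hgrad D2V hD2V q hq hEL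
end
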